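/- arXiv:2204.08574 — 3 statements merged into one kernel-verified Lean document; each statement's English description precedes it below -/
import Mathlib

section
/- Fix θ ∈ ℝ^p with θ_j ≠ 0 for all j, λ > 0, γ ∈ [0,2], and a positive integer n_e. Let (e_{ij})_{1≤i≤n_e, 1≤j≤p} be a jointly independent family of real Gaussian random variables with e_{ij} ~ N(0, λ|θ_j|^{−γ}). Then the PANDA expected penalty satisfies E[ ∑_{i=1}^{n_e} ( ∑_{j=1}^p θ_j e_{ij} )² ] = λ n_e ∑_{j=1}^p |θ_j|^{2−γ}, i.e. the bridge (l_{2−γ}) penalty, which is the l_0 penalty for γ = 2, the lasso penalty for γ = 1, and the ridge penalty for γ = 0. -/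
open MeasureTheory ProbabilityTheory
open scoped ProbabilityTheory NNReal

/-! Within one noise row the summands `θ_j e_ij` are pairwise independent and centred, so the
expected square of their sum is its variance, which is additive:
`∑_j θ_j² v_j = λ ∑_j |θ_j|^(2-γ)`. The `n_e` rows contribute equally. -/

namespace ProbabilityTheory

variable {Ω ι : Type*} {mΩ : MeasurableSpace Ω} {P : Measure Ω}

lemma integral_sq_sum_eq_sum_variance [IsFiniteMeasure P] {X : ι → Ω → ℝ} {s : Finset ι}
    (hX : ∀ i ∈ s, MemLp (X i) 2 P) (hmean : ∀ i ∈ s, P[X i] = 0)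
    (hindep : Set.Pairwise ↑s fun i j => X i ⟂ᵢ[P] X j) :
    ∫ ω, (∑ i ∈ s, X i ω) ^ 2 ∂P = ∑ i ∈ s, Var[X i; P] := by
  have hsum : MemLp (∑ i ∈ s, X i) 2 P := memLp_finsetSum' s hX
  have hmean_sum : P[∑ i ∈ s, X i] = 0 := by
    simp only [Finset.sum_apply]
    rw [integral_finsetSum s fun i hi => (hX i hi).integrable one_le_two]
    exact Finset.sum_eq_zero hmean
  rw [← IndepFun.variance_sum hX hindep, variance_eq_integral hsum.aemeasurable, hmean_sum]
  simp only [sub_zero, Finset.sum_apply]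

lemma HasLaw.memLp_of_gaussianReal {X : Ω → ℝ} {μ : ℝ} {v : ℝ≥0}
    (hX : HasLaw X (gaussianReal μ v) P) {p : ENNReal} (hp : p ≠ ⊤) : MemLp X p P :=
  (memLp_map_measure_iff aestronglyMeasurable_id hX.aemeasurable).1
    (hX.map_eq ▸ memLp_id_gaussianReal' p hp)

lemma HasLaw.integral_eq_of_gaussianReal {X : Ω → ℝ} {μ : ℝ} {v : ℝ≥0}
    (hX : HasLaw X (gaussianReal μ v) P) : P[X] = μ := by
  rw [hX.integral_eq, integral_id_gaussianReal]

lemma HasLaw.variance_eq_of_gaussianReal {X : Ω → ℝ} {μ : ℝ} {v : ℝ≥0}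
    (hX : HasLaw X (gaussianReal μ v) P) : Var[X; P] = v := by
  rw [hX.variance_eq, variance_id_gaussianReal]

/-- `Measure.map` of a function that is not a.e.-measurable is `0`, so the law being a probability
measure already forces a.e.-measurability. -/
lemma hasLaw_of_map_eq {𝓧 : Type*} {m𝓧 : MeasurableSpace 𝓧} {X : Ω → 𝓧} {μ : Measure 𝓧}
    [IsProbabilityMeasure μ] (h : P.map X = μ) : HasLaw X μ P where
  aemeasurable := .of_map_ne_zero (h ▸ IsProbabilityMeasure.ne_zero μ)
  map_eq := h

theorem integral_sq_sum_const_mul_of_gaussianReal [IsFiniteMeasure P] [Fintype ι]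
    {X : ι → Ω → ℝ} {v : ι → ℝ≥0} (hX : ∀ i, HasLaw (X i) (gaussianReal 0 (v i)) P)
    (hindep : Pairwise fun i j => X i ⟂ᵢ[P] X j) (c : ι → ℝ) :
    ∫ ω, (∑ i, c i * X i ω) ^ 2 ∂P = ∑ i, c i ^ 2 * v i := by
  rw [integral_sq_sum_eq_sum_variance (X := fun i ω => c i * X i ω)]
  · simp only [variance_const_mul, (hX _).variance_eq_of_gaussianReal]
  · exact fun i _ => ((hX i).memLp_of_gaussianReal (by simp)).const_mul (c i)
  · intro i _
    rw [integral_const_mul, (hX i).integral_eq_of_gaussianReal, mul_zero]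
  · exact fun i _ j _ hij =>
      (hindep hij).comp (measurable_const_mul (c i)) (measurable_const_mul (c j))

end ProbabilityTheory

lemma sq_mul_abs_rpow_neg {x : ℝ} (hx : x ≠ 0) (γ : ℝ) : x ^ 2 * |x| ^ (-γ) = |x| ^ (2 - γ) := by
  rw [← sq_abs, ← Real.rpow_natCast, ← Real.rpow_add (abs_pos.2 hx), sub_eq_add_neg]
  norm_num

theorem stmt_4_general {Ω : Type*} [MeasureSpace Ω] [IsProbabilityMeasure (ℙ : Measure Ω)]
    {p nE : ℕ} (θ : Fin p → ℝ) (hθ : ∀ j, θ j ≠ 0)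
    (lam γ : ℝ)
    (e : Fin nE → Fin p → Ω → ℝ)
    (hindep : iIndepFun
      (fun ij : Fin nE × Fin p => e ij.1 ij.2) ℙ)
    (v : Fin p → ℝ≥0) (hv : ∀ j, (v j : ℝ) = lam * |θ j| ^ (-γ))
    (hgauss : ∀ i j, Measure.map (e i j) ℙ = gaussianReal 0 (v j)) :
    (∫ ω, ∑ i, (∑ j, θ j * e i j ω) ^ 2 ∂ℙ)
      = lam * nE * ∑ j, |θ j| ^ (2 - γ) := by
  have hlaw : ∀ i j, HasLaw (e i j) (gaussianReal 0 (v j)) ℙ := fun i j =>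
    hasLaw_of_map_eq (hgauss i j)
  have hrow : ∀ i, ∫ ω, (∑ j, θ j * e i j ω) ^ 2 ∂ℙ = lam * ∑ j, |θ j| ^ (2 - γ) := by
    intro i
    have hrow_indep : Pairwise fun j k => e i j ⟂ᵢ[ℙ] e i k := fun j k hjk =>
      hindep.indepFun (i := (i, j)) (j := (i, k)) (by simpa using hjk)
    rw [integral_sq_sum_const_mul_of_gaussianReal (hlaw i) hrow_indep, Finset.mul_sum]
    refine Finset.sum_congr rfl fun j _ => ?_
    rw [hv, mul_left_comm, sq_mul_abs_rpow_neg (hθ j)]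
  rw [integral_finsetSum _ fun i _ => (memLp_finsetSum _ fun j _ =>
    ((hlaw i j).memLp_of_gaussianReal (by simp)).const_mul (θ j)).integrable_sq]
  simp only [hrow, Finset.sum_const, Finset.card_univ, Fintype.card_fin, nsmul_eq_mul]
  ring

/-- Bridge row of Table 1: with bridge-type Gaussian noise
e_{ij} ~ N(0, λ|θ_j|^{−γ}), the expected PANDA penalty is the bridge
penalty λ n_e ∑_j |θ_j|^{2−γ}. -/
theorem stmt_4 {Ω : Type*} [MeasureSpace Ω] [IsProbabilityMeasure (ℙ : Measure Ω)]
    {p nE : ℕ} (hnE : 0 < nE) (θ : Fin p → ℝ) (hθ : ∀ j, θ j ≠ 0)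
    (lam γ : ℝ) (hlam : 0 < lam) (hγ0 : 0 ≤ γ) (hγ2 : γ ≤ 2)
    (e : Fin nE → Fin p → Ω → ℝ) (hmeas : ∀ i j, Measurable (e i j))
    (hindep : iIndepFun
      (fun ij : Fin nE × Fin p => e ij.1 ij.2) ℙ)
    (v : Fin p → ℝ≥0) (hv : ∀ j, (v j : ℝ) = lam * |θ j| ^ (-γ))
    (hgauss : ∀ i j, Measure.map (e i j) ℙ = gaussianReal 0 (v j)) :
    (∫ ω, ∑ i, (∑ j, θ j * e i j ω) ^ 2 ∂ℙ)
      = lam * nE * ∑ j, |θ j| ^ (2 - γ) :=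
  stmt_4_general θ hθ lam γ e hindep v hv hgauss
end

section
/- Fix θ ∈ ℝ^p with θ_j ≠ 0 for all j, λ > 0, σ² ≥ 0, and a positive integer n_e. Let (e_{ij})_{1≤i≤n_e, 1≤j≤p} be a jointly independent family of real Gaussian random variables with e_{ij} ~ N(0, λ|θ_j|^{−1} + σ²). Then the PANDA expected penalty satisfies E[ ∑_{i=1}^{n_e} ( ∑_{j=1}^p θ_j e_{ij} )² ] = λ n_e ∑_{j=1}^p |θ_j| + σ² n_e ∑_{j=1}^p θ_j², i.e. the elastic-net penalty. -/
open MeasureTheory ProbabilityTheory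
open scoped ProbabilityTheory NNReal ENNReal

/-!
Within a row the summands `θ_j e_ij` are independent and centred, so the second moment of the row
sum is its variance, which splits as `∑ θ_j² v_j`. With `v_j = λ|θ_j|⁻¹ + σ²` each term is
`λ|θ_j| + σ²θ_j²`, and the `n_e` rows contribute equally.
-/

section

variable {Ω : Type*} {mΩ : MeasurableSpace Ω} {P : Measure Ω}

lemma ProbabilityTheory.HasLaw.memLp {E : Type*} [NormedAddCommGroup E] {mE : MeasurableSpace E}
    [OpensMeasurableSpace E] [SecondCountableTopology E] {μ : Measure E} {X : Ω → E} {p : ℝ≥0∞}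
    (hX : HasLaw X μ P) (hμ : MemLp id p μ) : MemLp X p P := by
  rw [← hX.map_eq] at hμ
  exact (memLp_map_measure_iff aestronglyMeasurable_id hX.aemeasurable).1 hμ

lemma integral_sq_sum_mul_eq_sum_sq_mul_variance [IsFiniteMeasure P] {ι : Type*} [Fintype ι]
    {X : ι → Ω → ℝ} (c : ι → ℝ) (hX : ∀ i, MemLp (X i) 2 P) (hmean : ∀ i, P[X i] = 0)
    (hindep : Pairwise fun i j => X i ⟂ᵢ[P] X j) :
    ∫ ω, (∑ i, c i * X i ω) ^ 2 ∂P = ∑ i, c i ^ 2 * Var[X i; P] := by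
  have hcX : ∀ i, MemLp (fun ω => c i * X i ω) 2 P := fun i => (hX i).const_mul (c i)
  have hsum_mean : P[∑ i, fun ω => c i * X i ω] = 0 := by
    simp only [Finset.sum_apply]
    rw [integral_finsetSum _ fun i _ => (hcX i).integrable one_le_two]
    simp [integral_const_mul, hmean]
  have hvar := variance_of_integral_eq_zero (memLp_finsetSum' _ fun i _ => hcX i).aemeasurable
    hsum_mean
  rw [IndepFun.variance_sum (fun i _ => hcX i)] at hvar
  · simpa only [Finset.sum_apply, variance_const_mul] using hvar.symm
  · intro i _ j _ hij
    exact (hindep hij).comp (measurable_const_mul (c i)) (measurable_const_mul (c j))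

end

lemma sq_mul_inv_abs (x : ℝ) : x ^ 2 * |x|⁻¹ = |x| := by
  rw [← sq_abs, sq, mul_self_mul_inv]

theorem stmt_5_general {Ω : Type*} [MeasureSpace Ω] [IsProbabilityMeasure (ℙ : Measure Ω)]
    {p nE : ℕ} (θ : Fin p → ℝ)
    (lam σ2 : ℝ)
    (e : Fin nE → Fin p → Ω → ℝ) (hmeas : ∀ i j, Measurable (e i j))
    (hindep : iIndepFun
      (fun ij : Fin nE × Fin p => e ij.1 ij.2) ℙ)
    (v : Fin p → ℝ≥0) (hv : ∀ j, (v j : ℝ) = lam * |θ j|⁻¹ + σ2)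
    (hgauss : ∀ i j, Measure.map (e i j) ℙ = gaussianReal 0 (v j)) :
    (∫ ω, ∑ i, (∑ j, θ j * e i j ω) ^ 2 ∂ℙ)
      = lam * nE * (∑ j, |θ j|) + σ2 * nE * ∑ j, θ j ^ 2 := by
  have hlaw i j : HasLaw (e i j) (gaussianReal 0 (v j)) ℙ := ⟨(hmeas i j).aemeasurable, hgauss i j⟩
  have hL2 i j : MemLp (e i j) 2 ℙ := (hlaw i j).memLp (memLp_id_gaussianReal 2)
  have hrow i : ∫ ω, (∑ j, θ j * e i j ω) ^ 2 ∂ℙ = ∑ j, θ j ^ 2 * v j := by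
    rw [integral_sq_sum_mul_eq_sum_sq_mul_variance θ (hL2 i)
      (fun j => by rw [(hlaw i j).integral_eq, integral_id_gaussianReal])
      (fun j k hjk => hindep.indepFun (show (i, j) ≠ (i, k) by simpa using hjk))]
    simp only [(hlaw i _).variance_eq, variance_id_gaussianReal]
  have hrow_integrable i : Integrable (fun ω => (∑ j, θ j * e i j ω) ^ 2) ℙ :=
    (memLp_finsetSum _ fun j _ => (hL2 i j).const_mul (θ j)).integrable_sq
  rw [integral_finsetSum _ fun i _ => hrow_integrable i]
  simp only [hrow, hv, mul_add, ← mul_assoc, mul_right_comm _ lam, sq_mul_inv_abs,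
    Finset.sum_add_distrib, ← Finset.sum_mul, Finset.sum_const, Finset.card_univ,
    Fintype.card_fin, nsmul_eq_mul]
  ring

/-- Elastic-net row of Table 1: with noise e_{ij} ~ N(0, λ|θ_j|⁻¹ + σ²), the
expected PANDA penalty is the elastic-net penalty λn_e∑|θ_j| + σ²n_e∑θ_j². -/
theorem stmt_5 {Ω : Type*} [MeasureSpace Ω] [IsProbabilityMeasure (ℙ : Measure Ω)]
    {p nE : ℕ} (hnE : 0 < nE) (θ : Fin p → ℝ) (hθ : ∀ j, θ j ≠ 0)
    (lam σ2 : ℝ) (hlam : 0 < lam) (hσ2 : 0 ≤ σ2)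
    (e : Fin nE → Fin p → Ω → ℝ) (hmeas : ∀ i j, Measurable (e i j))
    (hindep : iIndepFun
      (fun ij : Fin nE × Fin p => e ij.1 ij.2) ℙ)
    (v : Fin p → ℝ≥0) (hv : ∀ j, (v j : ℝ) = lam * |θ j|⁻¹ + σ2)
    (hgauss : ∀ i j, Measure.map (e i j) ℙ = gaussianReal 0 (v j)) :
    (∫ ω, ∑ i, (∑ j, θ j * e i j ω) ^ 2 ∂ℙ)
      = lam * nE * (∑ j, |θ j|) + σ2 * nE * ∑ j, θ j ^ 2 :=
  stmt_5_general θ lam σ2 e hmeas hindep v hv hgauss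
end

section
/- Fix θ ∈ ℝ^p with θ_j ≠ 0 for all j, a vector θ̂ ∈ ℝ^p with θ̂_j ≠ 0 for all j, λ > 0, γ ≥ 0, and a positive integer n_e. Let (e_{ij})_{1≤i≤n_e, 1≤j≤p} be a jointly independent family of real Gaussian random variables with e_{ij} ~ N(0, λ|θ_j|^{−1}|θ̂_j|^{−γ}). Then the PANDA expected penalty satisfies E[ ∑_{i=1}^{n_e} ( ∑_{j=1}^p θ_j e_{ij} )² ] = λ n_e ∑_{j=1}^p |θ_j| |θ̂_j|^{−γ}, i.e. the adaptive-lasso penalty with weights |θ̂_j|^{−γ}. -/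
open MeasureTheory ProbabilityTheory
open scoped ProbabilityTheory NNReal

section SecondMoment

variable {Ω ι : Type*} [MeasurableSpace Ω] {μ : Measure Ω} [IsFiniteMeasure μ] [Fintype ι]
  {X : ι → Ω → ℝ}

/-- Centring turns the second moment into a variance, which pairwise independence makes
additive. -/
theorem integral_sq_sum_const_mul_of_pairwise_indep (c : ι → ℝ)
    (hX : ∀ i, MemLp (X i) 2 μ) (hmean : ∀ i, μ[X i] = 0)
    (hindep : Pairwise fun i j => X i ⟂ᵢ[μ] X j) :
    ∫ ω, (∑ i, c i * X i ω) ^ 2 ∂μ = ∑ i, c i ^ 2 * Var[X i; μ] := by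
  have hcX : ∀ i, MemLp (fun ω => c i * X i ω) 2 μ := fun i => (hX i).const_mul (c i)
  have hsum_eq : (fun ω => ∑ i, c i * X i ω) = ∑ i, fun ω => c i * X i ω := by
    ext ω; simp only [Finset.sum_apply]
  have hsum_mean : μ[fun ω => ∑ i, c i * X i ω] = 0 := by
    rw [integral_finsetSum _ fun i _ => (hcX i).integrable one_le_two]
    simp only [integral_const_mul, hmean, mul_zero, Finset.sum_const_zero]
  rw [← variance_of_integral_eq_zero (memLp_finsetSum _ fun i _ => hcX i).aemeasurable
    hsum_mean, hsum_eq, IndepFun.variance_sum fun i _ => hcX i]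
  · simp only [variance_const_mul]
  · exact fun i _ j _ hij => (hindep hij).comp (measurable_const_mul (c i))
      (measurable_const_mul (c j))

end SecondMoment

theorem stmt_6_general {Ω : Type*} [MeasureSpace Ω] [IsProbabilityMeasure (ℙ : Measure Ω)]
    {p nE : ℕ} (θ θhat : Fin p → ℝ)
    (lam γ : ℝ)
    (e : Fin nE → Fin p → Ω → ℝ) (hmeas : ∀ i j, Measurable (e i j))
    (hindep : iIndepFun
      (fun ij : Fin nE × Fin p => e ij.1 ij.2) ℙ)
    (v : Fin p → ℝ≥0) (hv : ∀ j, (v j : ℝ) = lam * |θ j|⁻¹ * |θhat j| ^ (-γ))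
    (hgauss : ∀ i j, Measure.map (e i j) ℙ = gaussianReal 0 (v j)) :
    (∫ ω, ∑ i, (∑ j, θ j * e i j ω) ^ 2 ∂ℙ)
      = lam * nE * ∑ j, |θ j| * |θhat j| ^ (-γ) := by
  have hlaw (i j) : HasLaw (e i j) (gaussianReal 0 (v j)) ℙ :=
    ⟨(hmeas i j).aemeasurable, hgauss i j⟩
  have hL2 (i j) : MemLp (e i j) 2 ℙ := (hlaw i j).hasGaussianLaw.memLp_two
  have hrow (i) : ∫ ω, (∑ j, θ j * e i j ω) ^ 2 ∂ℙ = ∑ j, θ j ^ 2 * v j := by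
    rw [integral_sq_sum_const_mul_of_pairwise_indep θ (hL2 i)
      (fun j => by rw [(hlaw i j).integral_eq, integral_id_gaussianReal])
      (fun j k hjk => hindep.indepFun (i := (i, j)) (j := (i, k)) (by simpa using hjk))]
    simp only [(hlaw i _).variance_eq, variance_id_gaussianReal]
  have hweight (j) : θ j ^ 2 * v j = lam * (|θ j| * |θhat j| ^ (-γ)) := by
    rw [hv, ← sq_abs, sq, mul_comm lam, ← mul_assoc, ← mul_assoc, mul_self_mul_inv]
    ring
  rw [integral_finsetSum _ fun i _ => (memLp_finsetSum _ fun j _ =>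
      (hL2 i j).const_mul (θ j)).integrable_sq]
  simp only [hrow, hweight, ← Finset.mul_sum, Finset.sum_const, Finset.card_univ,
    Fintype.card_fin, nsmul_eq_mul]
  ring

/-- Adaptive-lasso row of Table 1: with noise e_{ij} ~ N(0, λ|θ_j|⁻¹|θ̂_j|^{−γ}),
the expected PANDA penalty is the adaptive-lasso penalty λn_e∑|θ_j||θ̂_j|^{−γ}. -/
theorem stmt_6 {Ω : Type*} [MeasureSpace Ω] [IsProbabilityMeasure (ℙ : Measure Ω)]
    {p nE : ℕ} (hnE : 0 < nE) (θ θhat : Fin p → ℝ)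
    (hθ : ∀ j, θ j ≠ 0) (hθhat : ∀ j, θhat j ≠ 0)
    (lam γ : ℝ) (hlam : 0 < lam) (hγ : 0 ≤ γ)
    (e : Fin nE → Fin p → Ω → ℝ) (hmeas : ∀ i j, Measurable (e i j))
    (hindep : iIndepFun
      (fun ij : Fin nE × Fin p => e ij.1 ij.2) ℙ)
    (v : Fin p → ℝ≥0) (hv : ∀ j, (v j : ℝ) = lam * |θ j|⁻¹ * |θhat j| ^ (-γ))
    (hgauss : ∀ i j, Measure.map (e i j) ℙ = gaussianReal 0 (v j)) :
    (∫ ω, ∑ i, (∑ j, θ j * e i j ω) ^ 2 ∂ℙ)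
      = lam * nE * ∑ j, |θ j| * |θhat j| ^ (-γ) :=
  stmt_6_general θ θhat lam γ e hmeas hindep v hv hgauss
end
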